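/- Let G(v, h) be defined layerwise by v_{i+1} = a_i(W_i^{(v)}(v_i ∘ s_i(h)) + W_i^{(α)}(α ∘ t_i(h)) + c_i(h)) where each a_i is convex and nondecreasing (componentwise), each W_i^{(v)} has nonnegative entries, s_i(h) is componentwise nonnegative, and t_i, c_i are arbitrary functions of h. Then for each fixed h, α ↦ G(α, h) is convex. -/

import Mathlib

/-!
Induction on the layers. The pre-activation of a unit of layer `i + 1` is a sum with nonnegative
weights `Wv i j l * s i l` of the (convex, by induction) units of layer `i`, plus a function that
is affine in `α`; hence it is convex, and composing with the convex nondecreasing activation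
`a i` keeps it convex.
-/

open Set

theorem ConvexOn.sum {𝕜 E β ι : Type*} [Semiring 𝕜] [PartialOrder 𝕜] [AddCommMonoid E]
    [AddCommMonoid β] [PartialOrder β] [IsOrderedAddMonoid β] [SMul 𝕜 E] [Module 𝕜 β]
    {s : Set E} {t : Finset ι} {f : ι → E → β} (hs : Convex 𝕜 s)
    (hf : ∀ i ∈ t, ConvexOn 𝕜 s (f i)) : ConvexOn 𝕜 s fun x => ∑ i ∈ t, f i x := by
  classical
  induction t using Finset.induction_on with
  | empty => simpa using convexOn_const (0 : β) hs
  | insert i t hi ih =>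
    simp_rw [Finset.sum_insert hi]
    exact (hf i (t.mem_insert_self i)).add (ih fun j hj => hf j (Finset.mem_insert_of_mem hj))

theorem ConvexOn.comp_of_monotone {𝕜 E β γ : Type*} [Semiring 𝕜] [PartialOrder 𝕜]
    [AddCommMonoid E] [AddCommMonoid β] [PartialOrder β] [AddCommMonoid γ] [PartialOrder γ]
    [SMul 𝕜 E] [SMul 𝕜 β] [SMul 𝕜 γ]
    {s : Set E} {f : E → β} {g : β → γ}
    (hg : ConvexOn 𝕜 univ g) (hg' : Monotone g) (hf : ConvexOn 𝕜 s f) : ConvexOn 𝕜 s (g ∘ f) :=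
  ⟨hf.1, fun _ hx _ hy _ _ ha hb hab =>
    (hg' (hf.2 hx hy ha hb hab)).trans (hg.2 trivial trivial ha hb hab)⟩

theorem convexOn_sum_mul_apply_add {ι : Type*} [Fintype ι] (w : ι → ℝ) (b : ℝ) :
    ConvexOn ℝ univ fun x : ι → ℝ => ∑ l, w l * x l + b :=
  ((Fintype.linearCombination ℝ w).convexOn convex_univ).add_const b |>.congr fun x _ => by
    simp [Fintype.linearCombination_apply, mul_comm]

/-- Convexity of the partially input convex neural network (PICNN) in the input `α`,
for a fixed conditioning input `h` (whose contribution is absorbed into the fixed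
data `s i`, `t i`, `c i`):
layers `v (i+1) α j = a i ((W^(v) i) (v i α ∘ s i) + (W^(α) i) (α ∘ t i) + c i) j`,
where each activation `a i` is convex and nondecreasing, each `W^(v) i` has
nonnegative entries, each `s i` is componentwise nonnegative, and the first layer
`v 0` is affine in `α`. Then every component of every layer — in particular the
output `G(α, h) = v k α` — is convex in `α`. -/
theorem picnn_convex_in_alpha
    {n : ℕ} {d : ℕ → ℕ} (k : ℕ)
    (v : (i : ℕ) → (Fin n → ℝ) → Fin (d i) → ℝ)
    (a : ℕ → ℝ → ℝ)
    (Wv : (i : ℕ) → Fin (d (i + 1)) → Fin (d i) → ℝ)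
    (Wα : (i : ℕ) → Fin (d (i + 1)) → Fin n → ℝ)
    (s : (i : ℕ) → Fin (d i) → ℝ)
    (t : (i : ℕ) → Fin n → ℝ)
    (c : (i : ℕ) → Fin (d (i + 1)) → ℝ)
    (ha_conv : ∀ i, ConvexOn ℝ Set.univ (a i))
    (ha_mono : ∀ i, Monotone (a i))
    (hWv : ∀ i j l, 0 ≤ Wv i j l)
    (hs : ∀ i l, 0 ≤ s i l)
    (hv0 : ∀ j : Fin (d 0), ∃ (w : Fin n → ℝ) (b : ℝ),
      ∀ α : Fin n → ℝ, v 0 α j = (∑ l, w l * α l) + b)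
    (hrec : ∀ i < k, ∀ (α : Fin n → ℝ) (j : Fin (d (i + 1))),
      v (i + 1) α j = a i ((∑ l, Wv i j l * (v i α l * s i l)) +
        (∑ l, Wα i j l * (α l * t i l)) + c i j)) :
    ∀ j : Fin (d k), ConvexOn ℝ Set.univ (fun α : Fin n → ℝ => v k α j) := by
  induction k with
  | zero =>
    intro j
    obtain ⟨w, b, hw⟩ := hv0 j
    exact (convexOn_sum_mul_apply_add w b).congr fun α _ => (hw α).symm
  | succ k ih =>
    have hv_convex := ih fun i hi => hrec i (Nat.lt_succ_of_lt hi)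
    intro j
    have hv_term : ConvexOn ℝ univ fun α : Fin n → ℝ => ∑ l, Wv k j l * (v k α l * s k l) :=
      ConvexOn.sum convex_univ fun l _ =>
        ((hv_convex l).smul (mul_nonneg (hWv k j l) (hs k l))).congr fun α _ => by
          simp only [smul_eq_mul]; ring
    have hα_term : ConvexOn ℝ univ fun α : Fin n → ℝ => ∑ l, Wα k j l * (α l * t k l) + c k j :=
      (convexOn_sum_mul_apply_add (fun l => Wα k j l * t k l) (c k j)).congr fun α _ => by
        simp only [mul_assoc, mul_comm (α _)]
    refine ((ha_conv k).comp_of_monotone (ha_mono k) (hv_term.add hα_term)).congr fun α _ => ?_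
    rw [hrec k k.lt_succ_self, Function.comp_apply, Pi.add_apply, add_assoc]
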